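/- Let T be a finite nonabelian simple group and let G be a strictly T-solvable finite group. Assume there exist two primes r,s ∈ π(T) such that r–s ∈ Γ̄(G), i.e., r ≠ s and G has no element of order rs. Then there exist a solvable normal subgroup N of G and a subgroup M of the automorphism group Aut(T) containing the group Inn(T) of inner automorphisms of T such that G/N is isomorphic to M. -/

import Mathlib

/-- `G` has an element of order `n`. -/
def hasElementOfOrder (G : Type*) [Group G] (n : ℕ) : Prop :=
  ∃ g : G, orderOf g = n

/-- The set `π(G)` of primes dividing the order of `G`. -/
def primeSet (G : Type*) [Group G] : Set ℕ :=
  {p | p.Prime ∧ p ∣ Nat.card G}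

/-- The prime graph `Γ(G)` of a finite group `G`, realized as a graph on `ℕ`:
two distinct primes dividing `|G|` are adjacent iff `G` has an element of order `p*q`. -/
def primeGraph (G : Type*) [Group G] : SimpleGraph ℕ where
  Adj p q := p ≠ q ∧ p ∈ primeSet G ∧ q ∈ primeSet G ∧ hasElementOfOrder G (p * q)
  symm := ⟨by rintro p q ⟨h1, h2, h3, h4⟩; exact ⟨h1.symm, h3, h2, by rwa [mul_comm]⟩⟩
  loopless := ⟨by rintro p ⟨h, -⟩; exact h rfl⟩

/-- The prime graph complement `Γ̄(G)`, realized as a graph on `ℕ`: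
two distinct primes dividing `|G|` are adjacent iff `G` has no element of order `p*q`. -/
def primeGraphCompl (G : Type*) [Group G] : SimpleGraph ℕ where
  Adj p q := p ≠ q ∧ p ∈ primeSet G ∧ q ∈ primeSet G ∧ ¬ hasElementOfOrder G (p * q)
  symm := ⟨by rintro p q ⟨h1, h2, h3, h4⟩; exact ⟨h1.symm, h3, h2, by rwa [mul_comm]⟩⟩
  loopless := ⟨by rintro p ⟨h, -⟩; exact h rfl⟩

/-- `Γ` is isomorphic to the prime graph of `G` (with vertex set `π(G)`). -/
def IsPrimeGraphOf {V : Type*} (Γ : SimpleGraph V) (G : Type*) [Group G] : Prop :=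
  Nonempty (Γ ≃g (primeGraph G).induce (primeSet G))

/-- A step `A ⊴ B` of a subnormal series whose factor group `B/A` is cyclic or
isomorphic to `T`. -/
def IsCyclicOrIsoTFactor (T : Type*) [Group T] {G : Type*} [Group G] (A B : Subgroup G) : Prop :=
  ∃ h : (A.subgroupOf B).Normal,
    haveI := h
    IsCyclic (↥B ⧸ A.subgroupOf B) ∨ Nonempty ((↥B ⧸ A.subgroupOf B) ≃* T)

/-- A step `A ⊴ B` of a subnormal series whose factor group `B/A` is isomorphic to `T`. -/
def IsIsoTFactor (T : Type*) [Group T] {G : Type*} [Group G] (A B : Subgroup G) : Prop :=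
  ∃ h : (A.subgroupOf B).Normal,
    haveI := h
    Nonempty ((↥B ⧸ A.subgroupOf B) ≃* T)

/-- `G` is `T`-solvable: `G` has a subnormal series each of whose factor groups is
cyclic or isomorphic to `T`. -/
def IsTSolvable (T : Type*) [Group T] (G : Type*) [Group G] : Prop :=
  ∃ (n : ℕ) (H : Fin (n + 1) → Subgroup G), Monotone H ∧ H 0 = ⊥ ∧ H (Fin.last n) = ⊤ ∧
    ∀ i : Fin n, IsCyclicOrIsoTFactor T (H i.castSucc) (H i.succ)

/-- `G` is strictly `T`-solvable: `G` has a subnormal series each of whose factor groups is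
cyclic or isomorphic to `T`, with at least one factor isomorphic to `T`. -/
def IsStrictlyTSolvable (T : Type*) [Group T] (G : Type*) [Group G] : Prop :=
  ∃ (n : ℕ) (H : Fin (n + 1) → Subgroup G), Monotone H ∧ H 0 = ⊥ ∧ H (Fin.last n) = ⊤ ∧
    (∀ i : Fin n, IsCyclicOrIsoTFactor T (H i.castSucc) (H i.succ)) ∧
    ∃ i : Fin n, IsIsoTFactor T (H i.castSucc) (H i.succ)

/-- `{x,y,z}` forms a triangle in `Γ`. -/
def IsTriangle {V : Type*} (Γ : SimpleGraph V) (x y z : V) : Prop :=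
  Γ.Adj x y ∧ Γ.Adj x z ∧ Γ.Adj y z

/-- A Fermat prime: a prime of the form `2^k + 1` with `k ≥ 1`. -/
def IsFermatPrime (r : ℕ) : Prop := r.Prime ∧ ∃ k : ℕ, 1 ≤ k ∧ r = 2 ^ k + 1

/-- `ρ` is a (nonzero) irreducible representation: the only invariant subspaces are `0` and
everything. -/
def IsIrreducibleRep {k G W : Type*} [CommSemiring k] [Monoid G] [AddCommMonoid W]
    [Module k W] (ρ : Representation k G W) : Prop :=
  (∃ w : W, w ≠ 0) ∧
    ∀ U : Submodule k W, (∀ g : G, ∀ u ∈ U, ρ g u ∈ U) → U = ⊥ ∨ U = ⊤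

/-- In every complex irreducible representation of `T` there is an element of order `r`
with a (nonzero) fixed point. -/
def EveryIrrRepHasOrderFixedPoint (T : Type*) [Group T] (r : ℕ) : Prop :=
  ∀ (W : Type) (_ : AddCommGroup W) (_ : Module ℂ W), FiniteDimensional ℂ W →
    ∀ ρ : Representation ℂ T W, IsIrreducibleRep ρ →
      ∃ t : T, orderOf t = r ∧ ∃ w : W, w ≠ 0 ∧ ρ t w = w

/-- A `p`-group satisfies the Frobenius criterion if it is cyclic, dihedral, Klein four,
or generalized quaternion. -/
def SatisfiesFrobeniusCriterion (P : Type*) [Group P] : Prop :=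
  IsCyclic P ∨ (∃ n : ℕ, Nonempty (P ≃* DihedralGroup n)) ∨
    Nonempty (P ≃* (Multiplicative (ZMod 2) × Multiplicative (ZMod 2))) ∨
    (∃ n : ℕ, Nonempty (P ≃* QuaternionGroup (2 ^ n)))

/-- The prime `r ∈ π(T)` is special relative to `(G, K, N)`: either `r ∤ |N|`, or `r` is odd
and there is `s ∈ π(T)`, `s ≠ r`, such that `G` has no element of order `r*s`. -/
def IsSpecialPrime (T : Type*) [Group T] (G : Type*) [Group G] {K : Type*} [Group K]
    (N : Subgroup K) (r : ℕ) : Prop :=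
  r ∈ primeSet T ∧
    (¬ r ∣ Nat.card ↥N ∨ (Odd r ∧ ∃ s ∈ primeSet T, r ≠ s ∧ ¬ hasElementOfOrder G (r * s)))

/-- `E` is a perfect central extension of `T`: `E` is perfect and there is a central
subgroup (namely the kernel of a surjection onto `T`) with quotient isomorphic to `T`. -/
def IsPerfectCentralExtensionOf (E : Type*) [Group E] (T : Type*) [Group T] : Prop :=
  commutator E = ⊤ ∧
    ∃ π : E →* T, Function.Surjective π ∧ ∀ x ∈ π.ker, ∀ y : E, x * y = y * x

/-- The factor `B/A` (with `A ≤ B ≤ G`) is an elementary abelian `p`-group: it is abelian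
and every element has order dividing `p`. -/
def IsElementaryAbelianFactor {G : Type*} [Group G] (p : ℕ) (A B : Subgroup G) : Prop :=
  (∀ x ∈ B, ∀ y ∈ B, x * y * x⁻¹ * y⁻¹ ∈ A) ∧ (∀ x ∈ B, x ^ p ∈ A)

/-!
Let `R` be the largest solvable normal subgroup of `G`. The quotient `G ⧸ R` is still
`T`-solvable, has no nontrivial solvable normal subgroup and no element of order `r * s`, and it
is nontrivial because `G` is not solvable. Such a group `Q` has a normal subgroup `S ≅ T` with
trivial centralizer, by induction along the series: if `K ⊴ Q` is its penultimate term, the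
induction hypothesis gives `S ⊴ K` with `C_K(S) = 1`, which forces `S ⊴ Q`, since a conjugate
of `S` meeting `S` trivially would centralize it. Then `C_Q(S)` embeds in `Q ⧸ K`, so it is
either cyclic, hence trivial, or isomorphic to `T`, and then an element of order `r` of `C_Q(S)`
times an element of order `s` of `S` has order `r * s`. Conjugation on `S` finally embeds `Q`
into `Aut T` with image containing `Inn T`.
-/

open Function Subgroup

section CyclicOrIso

def IsCyclicOrIso (T Q : Type*) [Group T] [Group Q] : Prop :=
  IsCyclic Q ∨ Nonempty (Q ≃* T)

variable {T Q Q' : Type*} [Group T] [IsSimpleGroup T] [Group Q] [Group Q']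

theorem IsCyclicOrIso.of_surjective (h : IsCyclicOrIso T Q) (f : Q →* Q') (hf : Surjective f) :
    IsCyclicOrIso T Q' := by
  rcases h with hQ | ⟨⟨e⟩⟩
  · exact Or.inl (isCyclic_of_surjective f hf)
  · set g : T →* Q' := f.comp e.symm.toMonoidHom
    have hg : Surjective g := hf.comp e.symm.surjective
    rcases g.normal_ker.eq_bot_or_eq_top with hker | hker
    · exact Or.inr ⟨(MulEquiv.ofBijective g ⟨g.ker_eq_bot_iff.mp hker, hg⟩).symm⟩
    · have hg1 : ∀ t, g t = 1 := fun t => g.mem_ker.mp (hker ▸ mem_top t)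
      have : Subsingleton Q' := ⟨fun a b => by
        obtain ⟨x, rfl⟩ := hg a
        obtain ⟨y, rfl⟩ := hg b
        rw [hg1, hg1]⟩
      exact Or.inl inferInstance

theorem IsCyclicOrIso.normal_subgroup (h : IsCyclicOrIso T Q) (N : Subgroup Q) [hN : N.Normal] :
    IsCyclicOrIso T N := by
  rcases h with hQ | ⟨⟨e⟩⟩
  · exact Or.inl inferInstance
  · have eN := Subgroup.equivMapOfInjective N e.toMonoidHom e.injective
    rcases (hN.map e.toMonoidHom e.surjective).eq_bot_or_eq_top with h | h
    · have eN' : N ≃* ↥(⊥ : Subgroup T) := eN.trans (MulEquiv.subgroupCongr h)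
      exact Or.inl (isCyclic_of_surjective eN'.symm.toMonoidHom eN'.symm.surjective)
    · exact Or.inr ⟨(eN.trans (MulEquiv.subgroupCongr h)).trans Subgroup.topEquiv⟩

theorem IsCyclicOrIso.of_disjoint {G : Type*} [Group G] {K C : Subgroup G} [K.Normal] [C.Normal]
    (h : IsCyclicOrIso T (G ⧸ K)) (hCK : Disjoint C K) : IsCyclicOrIso T C := by
  set f : C →* G ⧸ K := (QuotientGroup.mk' K).comp C.subtype
  have hf : Injective f := by
    refine (injective_iff_map_eq_one f).mpr fun x hx => ?_
    exact Subtype.ext (disjoint_def.mp hCK x.2 ((QuotientGroup.eq_one_iff _).mp hx))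
  have : f.range.Normal := by
    rw [MonoidHom.range_comp, range_subtype]
    exact ‹C.Normal›.map _ (QuotientGroup.mk'_surjective K)
  exact (h.normal_subgroup f.range).of_surjective (MonoidHom.ofInjective hf).symm.toMonoidHom
    (MulEquiv.surjective _)

end CyclicOrIso

section Series

variable {T G G' : Type*} [Group T] [Group G] [Group G']

variable (T G) in
def HasTSeries (n : ℕ) : Prop :=
  ∃ H : Fin (n + 1) → Subgroup G, Monotone H ∧ H 0 = ⊥ ∧ H (Fin.last n) = ⊤ ∧
    ∀ i : Fin n, IsCyclicOrIsoTFactor T (H i.castSucc) (H i.succ)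

theorem HasTSeries.subsingleton (h : HasTSeries T G 0) : Subsingleton G := by
  obtain ⟨H, -, hbot, htop, -⟩ := h
  exact subsingleton_iff.mp (subsingleton_of_bot_eq_top (hbot.symm.trans htop))

theorem IsStrictlyTSolvable.not_isSolvable (hT : ¬ Group.IsSolvable T)
    (h : IsStrictlyTSolvable T G) : ¬ Group.IsSolvable G := by
  obtain ⟨n, H, -, -, -, -, i, hn, ⟨e⟩⟩ := h
  intro hG
  exact hT (Group.isSolvable_of_surjective (f := e.toMonoidHom) e.surjective)

variable [IsSimpleGroup T]

theorem IsCyclicOrIsoTFactor.of_surjective {A B : Subgroup G} {A' B' : Subgroup G'}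
    (h : IsCyclicOrIsoTFactor T A B) (ψ : B →* B') (hψ : Surjective ψ)
    (hA : (A.subgroupOf B).map ψ = A'.subgroupOf B') : IsCyclicOrIsoTFactor T A' B' := by
  obtain ⟨hn, hq⟩ := h
  have hn' : (A'.subgroupOf B').Normal := hA ▸ hn.map ψ hψ
  refine ⟨hn', IsCyclicOrIso.of_surjective hq (QuotientGroup.map _ _ ψ ?_)
    (QuotientGroup.map_surjective_of_surjective _ _ ψ
      ((QuotientGroup.mk'_surjective _).comp hψ) _)⟩
  rw [← hA]
  exact le_comap_map ψ _

theorem IsCyclicOrIsoTFactor.map {A B : Subgroup G} (h : IsCyclicOrIsoTFactor T A B)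
    (hAB : A ≤ B) (f : G →* G') : IsCyclicOrIsoTFactor T (A.map f) (B.map f) := by
  refine h.of_surjective (f.subgroupMap B) (f.subgroupMap_surjective B) ?_
  ext ⟨x, hx⟩
  simp only [mem_map, mem_subgroupOf]
  constructor
  · rintro ⟨a, ha, hax⟩
    exact ⟨a, ha, congrArg Subtype.val hax⟩
  · rintro ⟨a, haA, rfl⟩
    exact ⟨⟨a, hAB haA⟩, haA, rfl⟩

theorem IsCyclicOrIsoTFactor.subgroupOf {A B : Subgroup G} (h : IsCyclicOrIsoTFactor T A B)
    {K : Subgroup G} (hBK : B ≤ K) :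
    IsCyclicOrIsoTFactor T (A.subgroupOf K) (B.subgroupOf K) := by
  refine h.of_surjective (subgroupOfEquivOfLe hBK).symm.toMonoidHom
    (MulEquiv.surjective _) ?_
  ext ⟨⟨x, hxK⟩, hxB⟩
  simp only [mem_map, mem_subgroupOf]
  constructor
  · rintro ⟨a, ha, hax⟩
    have hax : (a : G) = x := congrArg (fun y : ↥(B.subgroupOf K) => ((y : K) : G)) hax
    exact hax ▸ ha
  · intro hx
    exact ⟨⟨x, hxB⟩, hx, rfl⟩

theorem IsCyclicOrIsoTFactor.quotient_top {K : Subgroup G} (h : IsCyclicOrIsoTFactor T K ⊤) :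
    ∃ _ : K.Normal, IsCyclicOrIso T (G ⧸ K) := by
  obtain ⟨hn, hq⟩ := h
  have hK : K.Normal := by
    simpa only [subgroupOf_map_subtype, inf_top_eq] using
      hn.map (⊤ : Subgroup G).subtype fun g => ⟨⟨g, mem_top g⟩, rfl⟩
  exact ⟨hK, IsCyclicOrIso.of_surjective hq
    (QuotientGroup.map _ _ (⊤ : Subgroup G).subtype fun _ hx => hx)
    (QuotientGroup.map_surjective_of_surjective _ _ _
      ((QuotientGroup.mk'_surjective K).comp fun g => ⟨⟨g, mem_top g⟩, rfl⟩) _)⟩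

theorem HasTSeries.exists_normal_quotient {n : ℕ} (h : HasTSeries T G (n + 1)) :
    ∃ (K : Subgroup G) (_ : K.Normal), IsCyclicOrIso T (G ⧸ K) ∧ HasTSeries T K n := by
  obtain ⟨H, hmono, hbot, htop, hfac⟩ := h
  have hKle (i : Fin (n + 1)) : H i.castSucc ≤ H (Fin.last n).castSucc :=
    hmono (Fin.castSucc_le_castSucc_iff.mpr (Fin.le_last i))
  obtain ⟨hK, hq⟩ : ∃ _ : (H (Fin.last n).castSucc).Normal, IsCyclicOrIso T (G ⧸ _) := by
    have := hfac (Fin.last n)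
    rw [Fin.succ_last, htop] at this
    exact this.quotient_top
  refine ⟨_, hK, hq, fun i => (H i.castSucc).subgroupOf (H (Fin.last n).castSucc),
    fun i j hij => comap_mono (hmono (Fin.castSucc_le_castSucc_iff.mpr hij)), ?_, ?_, fun i => ?_⟩
  · simp only [Fin.castSucc_zero, hbot, bot_subgroupOf]
  · exact subgroupOf_self _
  · have := (hfac i.castSucc).subgroupOf (Fin.succ_castSucc i ▸ hKle i.succ)
    rwa [Fin.succ_castSucc] at this

theorem HasTSeries.map {n : ℕ} (h : HasTSeries T G n) (f : G →* G') (hf : Surjective f) :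
    HasTSeries T G' n := by
  obtain ⟨H, hmono, hbot, htop, hfac⟩ := h
  refine ⟨fun i => (H i).map f, fun i j hij => map_mono (hmono hij), ?_, ?_, fun i => ?_⟩
  · simp only [hbot, Subgroup.map_bot]
  · simp only [htop, map_top_of_surjective f hf]
  · exact (hfac i).map (hmono (Fin.castSucc_le_succ i)) f

end Series

section Radical

variable {G G' : Type*} [Group G] [Group G']

instance Subgroup.isSolvable_map (f : G →* G') (H : Subgroup G) [Group.IsSolvable H] :
    Group.IsSolvable (H.map f) :=
  Group.isSolvable_of_surjective (f.subgroupMap_surjective H)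

theorem isSolvable_of_le_of_isSolvable_map {N H : Subgroup G} [N.Normal] [Group.IsSolvable N]
    (hNH : N ≤ H) (h : Group.IsSolvable (H.map (QuotientGroup.mk' N))) : Group.IsSolvable H :=
  Group.isSolvable_of_ker_le_range (inclusion hNH) ((QuotientGroup.mk' N).subgroupMap H)
    fun x hx => ⟨⟨x, (QuotientGroup.eq_one_iff _).mp (congrArg Subtype.val hx)⟩, rfl⟩

variable (G) in
theorem exists_maximum_normal_isSolvable [Finite G] :
    ∃ R : Subgroup G, R.Normal ∧ Group.IsSolvable R ∧
      ∀ A : Subgroup G, A.Normal → Group.IsSolvable A → A ≤ R := by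
  have : Finite (Subgroup G) := Finite.of_injective _ SetLike.coe_injective
  obtain ⟨R, ⟨hRn, hRs⟩, hmax⟩ :=
    Set.Finite.exists_maximalFor id {A : Subgroup G | A.Normal ∧ Group.IsSolvable A}
      (Set.toFinite _) ⟨⊥, inferInstance, inferInstance⟩
  refine ⟨R, hRn, hRs, fun A hAn hAs => ?_⟩
  have hsup : Group.IsSolvable ↥(A ⊔ R) := by
    refine isSolvable_of_le_of_isSolvable_map le_sup_right ?_
    rw [Subgroup.map_sup, QuotientGroup.map_mk'_self, sup_bot_eq]
    infer_instance
  exact le_sup_left.trans (hmax ⟨Subgroup.sup_normal A R, hsup⟩ le_sup_right)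

variable (G) in
def SolvableRadicalTrivial : Prop :=
  ∀ A : Subgroup G, A.Normal → Group.IsSolvable A → A = ⊥

theorem SolvableRadicalTrivial.of_normal [Finite G] (hG : SolvableRadicalTrivial G)
    (K : Subgroup G) [K.Normal] : SolvableRadicalTrivial K := by
  obtain ⟨R, hRn, hRs, hRmax⟩ := exists_maximum_normal_isSolvable K
  have : R.Characteristic := characteristic_iff_map_le.mpr fun φ =>
    hRmax _ (hRn.map _ φ.surjective) inferInstance
  have hR : R = ⊥ :=
    (map_eq_bot_iff_of_injective R K.subtype_injective).mp (hG _ inferInstance inferInstance)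
  exact fun A hAn hAs => le_bot_iff.mp (hR ▸ hRmax A hAn hAs)

theorem solvableRadicalTrivial_quotient {R : Subgroup G} [R.Normal] [Group.IsSolvable R]
    (hR : ∀ A : Subgroup G, A.Normal → Group.IsSolvable A → A ≤ R) :
    SolvableRadicalTrivial (G ⧸ R) := by
  intro B hBn hBs
  have hRB : R ≤ B.comap (QuotientGroup.mk' R) := by
    simpa only [QuotientGroup.ker_mk'] using ker_le_comap (QuotientGroup.mk' R) B
  have hmap : (B.comap (QuotientGroup.mk' R)).map (QuotientGroup.mk' R) = B :=
    map_comap_eq_self_of_surjective (QuotientGroup.mk'_surjective R) B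
  have hle := hR _ (hBn.comap _) (isSolvable_of_le_of_isSolvable_map hRB (by rwa [hmap]))
  rw [← hmap, ← le_bot_iff, ← QuotientGroup.map_mk'_self R]
  exact map_mono hle

end Radical

section ElementOrders

variable {G Q : Type*} [Group G] [Group Q]

theorem hasElementOfOrder_of_surjective [Finite G] (f : G →* Q) (hf : Surjective f) {m : ℕ}
    (h : hasElementOfOrder Q m) : hasElementOfOrder G m := by
  obtain ⟨q, rfl⟩ := h
  obtain ⟨g, rfl⟩ := hf q
  exact ⟨_, orderOf_pow_orderOf_div (orderOf_pos g).ne' (orderOf_map_dvd f g)⟩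

theorem hasElementOfOrder_of_subgroup {K : Subgroup G} {m : ℕ} (h : hasElementOfOrder K m) :
    hasElementOfOrder G m := by
  obtain ⟨x, rfl⟩ := h
  exact ⟨x, Subgroup.orderOf_coe x⟩

theorem hasElementOfOrder_mul_of_le_centralizer [Finite G] {A B : Subgroup G}
    (hAB : A ≤ centralizer B) {p q : ℕ} (hp : p.Prime) (hq : q.Prime) (hpq : p ≠ q)
    (hpA : p ∣ Nat.card A) (hqB : q ∣ Nat.card B) : hasElementOfOrder G (p * q) := by
  have := Fact.mk hp
  have := Fact.mk hq
  obtain ⟨a, ha⟩ := exists_prime_orderOf_dvd_card' p hpA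
  obtain ⟨b, hb⟩ := exists_prime_orderOf_dvd_card' q hqB
  rw [← Subgroup.orderOf_coe] at ha hb
  have hab : Commute (a : G) b := (mem_centralizer_iff.mp (hAB a.2) b b.2).symm
  refine ⟨a * b, ?_⟩
  rw [hab.orderOf_mul_eq_mul_orderOf_of_coprime
    (by rw [ha, hb]; exact (Nat.coprime_primes hp hq).mpr hpq), ha, hb]

end ElementOrders

section AlmostSimple

variable {T G : Type*} [Group T] [Group G]

variable (T G) in
/-- For nonabelian simple `T` this says that `Inn T ≤ G ≤ Aut T` up to isomorphism. -/
def IsAlmostSimple : Prop :=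
  ∃ S : Subgroup G, ∃ _ : S.Normal, Nonempty (S ≃* T) ∧ centralizer (S : Set G) = ⊥

theorem IsAlmostSimple.exists_injective_mulAut (h : IsAlmostSimple T G) :
    ∃ φ : G →* MulAut T, Injective φ ∧ (MulAut.conj : T →* MulAut T).range ≤ φ.range := by
  obtain ⟨S, hS, ⟨e⟩, hC⟩ := h
  refine ⟨(MulAut.congr e).toMonoidHom.comp MulAut.conjNormal, ?_, ?_⟩
  · refine (injective_iff_map_eq_one _).mpr fun g hg => ?_
    have hg' : MulAut.conjNormal g = (1 : MulAut S) :=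
      (MulAut.congr e).injective (by rw [map_one]; exact hg)
    have : g ∈ centralizer (S : Set G) := mem_centralizer_iff.mpr fun x hx => by
      have := congrArg Subtype.val (DFunLike.congr_fun hg' ⟨x, hx⟩)
      simp only [MulAut.conjNormal_apply, MulAut.one_apply] at this
      exact (mul_inv_eq_iff_eq_mul.mp this).symm
    rwa [hC, mem_bot] at this
  · rintro _ ⟨t, rfl⟩
    refine ⟨(e.symm t : G), ?_⟩
    ext u
    simp [MulAut.conjNormal_val]

theorem SolvableRadicalTrivial.eq_bot_of_isCyclic (hrad : SolvableRadicalTrivial G)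
    (A : Subgroup G) [A.Normal] [IsCyclic A] : A = ⊥ :=
  let _ := IsCyclic.commGroup (α := A)
  hrad A inferInstance inferInstance

theorem normal_map_subtype_of_centralizer_eq_bot {K : Subgroup G} [K.Normal] {S : Subgroup K}
    [hS : S.Normal] [IsSimpleGroup S] (hC : centralizer (S : Set K) = ⊥) :
    (S.map K.subtype).Normal := by
  have hle (g : G) : S ≤ S.map (MulAut.conjNormal g).toMonoidHom := by
    set S' := S.map (MulAut.conjNormal g).toMonoidHom
    have hS' : S'.Normal := hS.map _ (MulAut.conjNormal g).surjective
    rcases (hS'.subgroupOf S).eq_bot_or_eq_top with h | h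
    · -- a conjugate meeting `S` trivially would centralize it
      have hS'C : S' ≤ centralizer S := fun y hy => mem_centralizer_iff.mpr fun x hx =>
        commute_of_normal_of_disjoint _ _ hS hS' (subgroupOf_eq_bot.mp h).symm x y hx hy
      rw [hC, le_bot_iff] at hS'C
      exact absurd ((map_eq_bot_iff_of_injective S (f := (MulAut.conjNormal g).toMonoidHom)
        (MulAut.conjNormal g).injective).mp hS'C) ((nontrivial_iff_ne_bot S).mp inferInstance)
    · exact subgroupOf_eq_top.mp h
  refine ⟨fun _ ⟨x, hx, hxg⟩ g => ?_⟩
  obtain ⟨y, hy, hyx⟩ := hle g⁻¹ hx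
  refine ⟨y, hy, ?_⟩
  rw [← hxg, ← hyx]
  simp only [MulEquiv.coe_toMonoidHom, MulAut.conjNormal_apply, coe_subtype]
  group

theorem disjoint_centralizer_map_subtype {K : Subgroup G} {S : Subgroup K}
    (hC : centralizer (S : Set K) = ⊥) : Disjoint (centralizer (S.map K.subtype : Set G)) K := by
  refine disjoint_def.mpr fun {x} hxC hxK => ?_
  have : (⟨x, hxK⟩ : K) ∈ centralizer (S : Set K) := mem_centralizer_iff.mpr fun y hy =>
    Subtype.ext (mem_centralizer_iff.mp hxC y (mem_map_of_mem _ hy))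
  rw [hC, mem_bot] at this
  exact congrArg Subtype.val this

variable [IsSimpleGroup T]

theorem centralizer_eq_bot_of_disjoint [Finite G] (hrad : SolvableRadicalTrivial G)
    {K : Subgroup G} [K.Normal] (hGK : IsCyclicOrIso T (G ⧸ K)) {S : Subgroup G} [S.Normal]
    (hS : Nonempty (S ≃* T)) (hSK : Disjoint (centralizer (S : Set G)) K) {r s : ℕ}
    (hr : r ∈ primeSet T) (hs : s ∈ primeSet T) (hrs : r ≠ s)
    (hedge : ¬ hasElementOfOrder G (r * s)) : centralizer (S : Set G) = ⊥ := by
  obtain ⟨e⟩ := hS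
  rcases hGK.of_disjoint hSK with hcyc | ⟨⟨eC⟩⟩
  · exact hrad.eq_bot_of_isCyclic _
  · exact absurd (hasElementOfOrder_mul_of_le_centralizer le_rfl hr.1 hs.1 hrs
      (Nat.card_congr eC.toEquiv ▸ hr.2) (Nat.card_congr e.toEquiv ▸ hs.2)) hedge

theorem HasTSeries.subsingleton_or_isAlmostSimple [Finite G] {n : ℕ} (hG : HasTSeries T G n)
    (hrad : SolvableRadicalTrivial G) {r s : ℕ} (hr : r ∈ primeSet T) (hs : s ∈ primeSet T)
    (hrs : r ≠ s) (hedge : ¬ hasElementOfOrder G (r * s)) :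
    Subsingleton G ∨ IsAlmostSimple T G := by
  induction n generalizing G with
  | zero => exact Or.inl hG.subsingleton
  | succ n ih =>
    obtain ⟨K, hK, hGK, hKser⟩ := hG.exists_normal_quotient
    rcases ih hKser (hrad.of_normal K) fun h => hedge (hasElementOfOrder_of_subgroup h) with
      hK1 | ⟨S, hS, ⟨e⟩, hC⟩
    · have hK : K = ⊥ := eq_bot_of_subsingleton K
      rcases hGK.of_disjoint (C := ⊤) (hK ▸ disjoint_bot_right) with hcyc | he
      · have htop := hrad.eq_bot_of_isCyclic ⊤
        exact Or.inl (subsingleton_iff.mp (subsingleton_of_bot_eq_top htop.symm))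
      · exact Or.inr ⟨⊤, inferInstance, he, centralizer_eq_bot_of_disjoint hrad hGK he
          (hK ▸ disjoint_bot_right) hr hs hrs hedge⟩
    · have := e.isSimpleGroup
      have hSG := normal_map_subtype_of_centralizer_eq_bot hC
      have eS := (equivMapOfInjective S _ K.subtype_injective).symm.trans e
      exact Or.inr ⟨_, hSG, ⟨eS⟩, centralizer_eq_bot_of_disjoint hrad hGK ⟨eS⟩
        (disjoint_centralizer_map_subtype hC) hr hs hrs hedge⟩

end AlmostSimple

theorem statement4_general (T : Type) [Group T] [IsSimpleGroup T]
    (hnab : ∃ a b : T, a * b ≠ b * a)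
    (G : Type) [Group G] [Finite G] (hG : IsStrictlyTSolvable T G)
    (r s : ℕ) (hr : r ∈ primeSet T) (hs : s ∈ primeSet T) (hrs : r ≠ s)
    (hedge : ¬ hasElementOfOrder G (r * s)) :
    ∃ (N : Subgroup G) (M : Subgroup (MulAut T)) (φ : G →* ↥M),
      N.Normal ∧ IsSolvable ↥N ∧ (MulAut.conj : T →* MulAut T).range ≤ M ∧
      Function.Surjective φ ∧ φ.ker = N := by
  have hT : ¬ Group.IsSolvable T := fun h =>
    have ⟨a, b, hab⟩ := hnab
    hab (IsSimpleGroup.comm_iff_isSolvable.mpr h a b)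
  have hGns := hG.not_isSolvable hT
  obtain ⟨n, H, hmono, hbot, htop, hfac, -⟩ := hG
  obtain ⟨R, hRn, hRs, hRmax⟩ := exists_maximum_normal_isSolvable G
  have hQ : HasTSeries T (G ⧸ R) n :=
    HasTSeries.map ⟨H, hmono, hbot, htop, hfac⟩ _ (QuotientGroup.mk'_surjective R)
  rcases hQ.subsingleton_or_isAlmostSimple (solvableRadicalTrivial_quotient hRmax) hr hs hrs
    fun h => hedge (hasElementOfOrder_of_surjective _ (QuotientGroup.mk'_surjective R) h) with
    hQtriv | hQS
  · exact absurd ((Group.isSolvable_iff_subgroup_quotient R).mpr ⟨hRs, inferInstance⟩) hGns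
  obtain ⟨φ, hφ, hinn⟩ := hQS.exists_injective_mulAut
  refine ⟨R, φ.range, φ.rangeRestrict.comp (QuotientGroup.mk' R), hRn, hRs, hinn,
    φ.rangeRestrict_surjective.comp (QuotientGroup.mk'_surjective R), ?_⟩
  rw [← MonoidHom.comap_ker, MonoidHom.ker_rangeRestrict, (MonoidHom.ker_eq_bot_iff φ).mpr hφ,
    MonoidHom.comap_bot, QuotientGroup.ker_mk']

/-- If `G` is strictly `T`-solvable and some edge between two primes of `π(T)`
lies in `Γ̄(G)`, then `G ≅ N.M` with `N` solvable normal and `Inn(T) ≤ M ≤ Aut(T)`. -/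
theorem statement4 (T : Type) [Group T] [Finite T] [IsSimpleGroup T]
    (hnab : ∃ a b : T, a * b ≠ b * a)
    (G : Type) [Group G] [Finite G] (hG : IsStrictlyTSolvable T G)
    (r s : ℕ) (hr : r ∈ primeSet T) (hs : s ∈ primeSet T) (hrs : r ≠ s)
    (hedge : ¬ hasElementOfOrder G (r * s)) :
    ∃ (N : Subgroup G) (M : Subgroup (MulAut T)) (φ : G →* ↥M),
      N.Normal ∧ IsSolvable ↥N ∧ (MulAut.conj : T →* MulAut T).range ≤ M ∧
      Function.Surjective φ ∧ φ.ker = N :=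
  statement4_general T hnab G hG r s hr hs hrs hedge
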